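/- arXiv:1504.06289 — 5 statements merged into one kernel-verified Lean document; each statement's English description precedes it below -/
import Mathlib

section
/- Fix index sets: let I be a finite index set (of pairs of basis functions). For ℓ = 1, 2, 3 let g_i^{(ℓ)} : ℤ → ℝ (i ∈ I) be finitely supported, and suppose each admits an exact factorization g_i^{(ℓ)} = Σ_{s=1}^{R_ℓ} V^{(ℓ)}(i, s) u_s^{(ℓ)} for finitely supported u_s^{(ℓ)} : ℤ → ℝ and a matrix V^{(ℓ)} ∈ ℝ^{|I| × R_ℓ}. Let p_k^{(ℓ)} : ℤ → ℝ (k = 1,…,R) be finitely supported kernel factors. Define the matrix B ∈ ℝ^{|I| × |I|} by B(i, j) = Σ_{x ∈ ℤ³} (∏_{ℓ=1}^{3} g_i^{(ℓ)}(x_ℓ)) · Σ_{y ∈ ℤ³} (Σ_{k=1}^{R} ∏_{ℓ=1}^{3} p_k^{(ℓ)}(x_ℓ − y_ℓ)) ∏_{ℓ=1}^{3} g_j^{(ℓ)}(y_ℓ), and for each k, ℓ the matrix M_k^{(ℓ)} ∈ ℝ^{R_ℓ × R_ℓ} by M_k^{(ℓ)}(s, t) = Σ_{x ∈ ℤ}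 Σ_{y ∈ ℤ} u_s^{(ℓ)}(x) p_k^{(ℓ)}(x − y) u_t^{(ℓ)}(y). Then B(i, j) = Σ_{k=1}^{R} ∏_{ℓ=1}^{3} (V^{(ℓ)} M_k^{(ℓ)} (V^{(ℓ)})ᵀ)(i, j) for all i, j ∈ I; that is, B is the entrywise (Hadamard) product over ℓ of the matrices V^{(ℓ)} M_k^{(ℓ)} (V^{(ℓ)})ᵀ, summed over k. -/
open Matrix

private lemma swap4 {α β γ δ M : Type*} [AddCommMonoid M]
    (A : Finset α) (B : Finset β) (C : Finset γ) (D : Finset δ)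
    (f : α → β → γ → δ → M) :
    (∑ a ∈ A, ∑ b ∈ B, ∑ c ∈ C, ∑ d ∈ D, f a b c d)
      = ∑ c ∈ C, ∑ d ∈ D, ∑ a ∈ A, ∑ b ∈ B, f a b c d := by
  calc (∑ a ∈ A, ∑ b ∈ B, ∑ c ∈ C, ∑ d ∈ D, f a b c d)
      = ∑ a ∈ A, ∑ c ∈ C, ∑ b ∈ B, ∑ d ∈ D, f a b c d :=
        Finset.sum_congr rfl fun a _ => Finset.sum_comm
    _ = ∑ c ∈ C, ∑ a ∈ A, ∑ b ∈ B, ∑ d ∈ D, f a b c d := Finset.sum_comm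
    _ = ∑ c ∈ C, ∑ a ∈ A, ∑ d ∈ D, ∑ b ∈ B, f a b c d :=
        Finset.sum_congr rfl fun c _ => Finset.sum_congr rfl fun a _ => Finset.sum_comm
    _ = ∑ c ∈ C, ∑ d ∈ D, ∑ a ∈ A, ∑ b ∈ B, f a b c d :=
        Finset.sum_congr rfl fun c _ => Finset.sum_comm

/-- Factorized grid-based representation of the two-electron integrals matrix:
with one-dimensional density fitting `g_i^(ℓ) = Σ_s V^(ℓ)(i,s) u_s^(ℓ)` and a
rank-R separable kernel, the TEI matrix is the Hadamard product over the modes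
of the matrices `V^(ℓ) M_k^(ℓ) (V^(ℓ))ᵀ`, summed over k. -/
theorem TEI_factorized_representation
    (I : Type*) [Fintype I] (R : ℕ) (Rl : Fin 3 → ℕ)
    (g : I → (ℓ : Fin 3) → ℤ → ℝ)
    (u : (ℓ : Fin 3) → Fin (Rl ℓ) → ℤ → ℝ)
    (V : (ℓ : Fin 3) → Matrix I (Fin (Rl ℓ)) ℝ)
    (p : Fin R → (ℓ : Fin 3) → ℤ → ℝ)
    (hg : ∀ i ℓ, (Function.support (g i ℓ)).Finite)
    (hu : ∀ ℓ s, (Function.support (u ℓ s)).Finite)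
    (hp : ∀ k ℓ, (Function.support (p k ℓ)).Finite)
    (hfit : ∀ i ℓ m, g i ℓ m = ∑ s : Fin (Rl ℓ), V ℓ i s * u ℓ s m)
    (B : Matrix I I ℝ)
    (hB : ∀ i j, B i j =
      ∑' x : Fin 3 → ℤ, (∏ ℓ : Fin 3, g i ℓ (x ℓ)) *
        ∑' y : Fin 3 → ℤ,
          (∑ k : Fin R, ∏ ℓ : Fin 3, p k ℓ (x ℓ - y ℓ)) *
            ∏ ℓ : Fin 3, g j ℓ (y ℓ))
    (M : (k : Fin R) → (ℓ : Fin 3) → Matrix (Fin (Rl ℓ)) (Fin (Rl ℓ)) ℝ)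
    (hM : ∀ k ℓ s t, M k ℓ s t =
      ∑' x : ℤ, ∑' y : ℤ, u ℓ s x * p k ℓ (x - y) * u ℓ t y) :
    ∀ i j, B i j = ∑ k : Fin R, ∏ ℓ : Fin 3, (V ℓ * M k ℓ * (V ℓ)ᵀ) i j := by
  classical
  intro i j
  -- a finset per direction containing all relevant supports
  set Z : Fin 3 → Finset ℤ := fun ℓ =>
    (Finset.univ.biUnion fun a : I => (hg a ℓ).toFinset) ∪
      (Finset.univ.biUnion fun s : Fin (Rl ℓ) => (hu ℓ s).toFinset) with hZdef
  have hgZ : ∀ (a : I) (ℓ : Fin 3) (m : ℤ), m ∉ Z ℓ → g a ℓ m = 0 := by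
    intro a ℓ m hm
    by_contra h
    exact hm (Finset.mem_union_left _ (Finset.mem_biUnion.2
      ⟨a, Finset.mem_univ _, (hg a ℓ).mem_toFinset.2 h⟩))
  have huZ : ∀ (ℓ : Fin 3) (s : Fin (Rl ℓ)) (m : ℤ), m ∉ Z ℓ → u ℓ s m = 0 := by
    intro ℓ s m hm
    by_contra h
    exact hm (Finset.mem_union_right _ (Finset.mem_biUnion.2
      ⟨s, Finset.mem_univ _, (hu ℓ s).mem_toFinset.2 h⟩))
  set P : Finset (Fin 3 → ℤ) := Fintype.piFinset Z with hPdef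
  have hnotP : ∀ (a : I) (z : Fin 3 → ℤ), z ∉ P →
      (∏ ℓ : Fin 3, g a ℓ (z ℓ)) = 0 := by
    intro a z hz
    have : ∃ ℓ, z ℓ ∉ Z ℓ := by
      by_contra h
      push_neg at h
      exact hz (Fintype.mem_piFinset.2 h)
    obtain ⟨ℓ, hℓ⟩ := this
    exact Finset.prod_eq_zero (Finset.mem_univ ℓ) (hgZ a ℓ _ hℓ)
  -- convert the inner tsum to a finite sum
  have hy : ∀ x : Fin 3 → ℤ,
      (∑' y : Fin 3 → ℤ, (∑ k : Fin R, ∏ ℓ : Fin 3, p k ℓ (x ℓ - y ℓ)) *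
          ∏ ℓ : Fin 3, g j ℓ (y ℓ))
        = ∑ y ∈ P, (∑ k : Fin R, ∏ ℓ : Fin 3, p k ℓ (x ℓ - y ℓ)) *
            ∏ ℓ : Fin 3, g j ℓ (y ℓ) := by
    intro x
    refine tsum_eq_sum fun y hyP => ?_
    rw [hnotP j y hyP, mul_zero]
  -- convert the outer tsum
  have hBfin : B i j = ∑ x ∈ P, (∏ ℓ : Fin 3, g i ℓ (x ℓ)) *
      ∑ y ∈ P, (∑ k : Fin R, ∏ ℓ : Fin 3, p k ℓ (x ℓ - y ℓ)) *
        ∏ ℓ : Fin 3, g j ℓ (y ℓ) := by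
    rw [hB i j]
    rw [tsum_congr fun x => by rw [hy x]]
    refine tsum_eq_sum fun x hxP => ?_
    rw [hnotP i x hxP, zero_mul]
  -- convert M's tsums to finite sums
  have hMfin : ∀ k ℓ s t, M k ℓ s t =
      ∑ x ∈ Z ℓ, ∑ y ∈ Z ℓ, u ℓ s x * p k ℓ (x - y) * u ℓ t y := by
    intro k ℓ s t
    rw [hM k ℓ s t]
    rw [tsum_congr fun x => tsum_eq_sum (s := Z ℓ) fun y hyZ => by
      rw [huZ ℓ t y hyZ, mul_zero]]
    refine tsum_eq_sum fun x hxZ => ?_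
    refine Finset.sum_eq_zero fun y _ => ?_
    rw [huZ ℓ s x hxZ, zero_mul, zero_mul]
  -- key: entrywise formula for the factor matrices
  have key : ∀ (k : Fin R) (ℓ : Fin 3), (V ℓ * M k ℓ * (V ℓ)ᵀ) i j
      = ∑ x ∈ Z ℓ, ∑ y ∈ Z ℓ, g i ℓ x * p k ℓ (x - y) * g j ℓ y := by
    intro k ℓ
    have lhs : (V ℓ * M k ℓ * (V ℓ)ᵀ) i j
        = ∑ t : Fin (Rl ℓ), ∑ s : Fin (Rl ℓ),
            ∑ x ∈ Z ℓ, ∑ y ∈ Z ℓ,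
              (V ℓ i s * u ℓ s x) * p k ℓ (x - y) * (V ℓ j t * u ℓ t y) := by
      simp only [Matrix.mul_apply, Matrix.transpose_apply, hMfin,
        Finset.sum_mul, Finset.mul_sum]
      refine Finset.sum_congr rfl fun t _ => Finset.sum_congr rfl fun s _ =>
        Finset.sum_congr rfl fun x _ => Finset.sum_congr rfl fun y _ => ?_
      ring
    have swp := swap4 (M := ℝ) (Finset.univ (α := Fin (Rl ℓ))) (Finset.univ (α := Fin (Rl ℓ)))
      (Z ℓ) (Z ℓ)
      (fun t s x y => (V ℓ i s * u ℓ s x) * p k ℓ (x - y) * (V ℓ j t * u ℓ t y))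
    rw [lhs]
    rw [swp]
    refine Finset.sum_congr rfl fun x _ => Finset.sum_congr rfl fun y _ => ?_
    refine Eq.symm ?_
    rw [hfit i ℓ x, hfit j ℓ y, Finset.mul_sum]
    refine Finset.sum_congr rfl fun t _ => ?_
    rw [Finset.sum_mul, Finset.sum_mul]
  -- reorganize the finite sums
  have step : ∀ k : Fin R,
      (∑ x ∈ P, ∑ y ∈ P, ∏ ℓ : Fin 3, (g i ℓ (x ℓ) * p k ℓ (x ℓ - y ℓ) * g j ℓ (y ℓ)))
        = ∏ ℓ : Fin 3, ∑ x ∈ Z ℓ, ∑ y ∈ Z ℓ, g i ℓ x * p k ℓ (x - y) * g j ℓ y := by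
    intro k
    rw [Finset.prod_univ_sum]
    refine Finset.sum_congr rfl fun x _ => ?_
    rw [Finset.prod_univ_sum]
  have comm3 : ∀ f : (Fin 3 → ℤ) → (Fin 3 → ℤ) → Fin R → ℝ,
      (∑ x ∈ P, ∑ y ∈ P, ∑ k : Fin R, f x y k)
        = ∑ k : Fin R, ∑ x ∈ P, ∑ y ∈ P, f x y k := by
    intro f
    calc (∑ x ∈ P, ∑ y ∈ P, ∑ k : Fin R, f x y k)
        = ∑ x ∈ P, ∑ k : Fin R, ∑ y ∈ P, f x y k :=
          Finset.sum_congr rfl fun x _ => Finset.sum_comm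
      _ = ∑ k : Fin R, ∑ x ∈ P, ∑ y ∈ P, f x y k := Finset.sum_comm
  have rhs_eq : (∑ k : Fin R, ∏ ℓ : Fin 3, (V ℓ * M k ℓ * (V ℓ)ᵀ) i j)
      = ∑ k : Fin R, ∑ x ∈ P, ∑ y ∈ P,
          ∏ ℓ : Fin 3, (g i ℓ (x ℓ) * p k ℓ (x ℓ - y ℓ) * g j ℓ (y ℓ)) :=
    Finset.sum_congr rfl fun k _ =>
      (Finset.prod_congr rfl fun ℓ _ => key k ℓ).trans (step k).symm
  rw [hBfin, rhs_eq]
  simp only [Finset.mul_sum, Finset.sum_mul]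
  rw [comm3]
  refine Finset.sum_congr rfl fun k _ => Finset.sum_congr rfl fun x _ =>
    Finset.sum_congr rfl fun y _ => ?_
  rw [Finset.prod_mul_distrib, Finset.prod_mul_distrib]
  ring
end

section
/- Let z be a nonzero complex number and L ∈ ℕ. For every i ∈ {0, 1, …, 2^L − 1} with binary digits j₁,…,j_L ∈ {0,1} (so that i = Σ_{ν=1}^{L} j_ν 2^{ν−1}), one has z^i = ∏_{ν=1}^{L} u^{(ν)}(j_ν), where u^{(ν)} : {0,1} → ℂ is given by u^{(ν)}(0) = 1 and u^{(ν)}(1) = z^{2^{ν−1}}. In other words, the quantized image of the exponential vector (z^i)_{i=0}^{2^L−1}, reshaped to an L-dimensional 2×⋯×2 array via binary coding, is a rank-1 canonical tensor. -/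
/-- The quantics (QTT) folding of the exponential vector `(z^i)` is an exact
rank-1 canonical tensor: `z^i = ∏_ν u^(ν)(j_ν)` where `j_ν` are the binary
digits of `i`, `u^(ν)(0) = 1` and `u^(ν)(1) = z^(2^ν)`. -/
theorem qtt_exponential_rank_one
    (z : ℂ) (hz : z ≠ 0) (L : ℕ)
    (u : Fin L → Fin 2 → ℂ)
    (hu0 : ∀ ν, u ν 0 = 1)
    (hu1 : ∀ ν, u ν 1 = z ^ (2 ^ (ν : ℕ))) :
    ∀ j : Fin L → Fin 2,
      z ^ (∑ ν : Fin L, (j ν : ℕ) * 2 ^ (ν : ℕ)) = ∏ ν : Fin L, u ν (j ν) := by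
  intro j
  rw [← Finset.prod_pow_eq_pow_sum]
  apply Finset.prod_congr rfl
  intro ν _
  have : j ν = 0 ∨ j ν = 1 := by omega
  rcases this with h | h <;> rw [h] <;> simp [hu0, hu1, pow_mul]
end

section
/- Let ω, φ ∈ ℝ and L ∈ ℕ with L ≥ 1. Then there exist maps A^{(ν)} : {0,1} → ℝ^{r_{ν−1} × r_ν} for ν = 1,…,L, with ranks r₀ = r_L = 1 and r_ν ≤ 2 for 1 ≤ ν ≤ L−1, such that for every i ∈ {0,…,2^L − 1} with binary digits j₁,…,j_L (i = Σ_{ν=1}^{L} j_ν 2^{ν−1}), the 1×1 matrix product satisfies A^{(1)}(j₁) A^{(2)}(j₂) ⋯ A^{(L)}(j_L) = sin(φ + ω i). That is, the quantized image of the trigonometric vector (sin(φ + ω i))_{i=0}^{2^L−1} admits an exact tensor-train (matrix product states) representation with all TT-ranks at most 2. -/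
noncomputable def qttRow (x : ℝ) : Fin 2 → ℝ := ![Real.sin x, Real.cos x]

noncomputable def qttRot (θ : ℝ) : Matrix (Fin 2) (Fin 2) ℝ :=
  !![Real.cos θ, -Real.sin θ; Real.sin θ, Real.cos θ]

lemma qtt_step (x θ : ℝ) (c : Fin 2) :
    ∑ a : Fin 2, qttRow x a * qttRot θ a c = qttRow (x + θ) c := by
  fin_cases c <;>
    simp [qttRow, qttRot, Fin.sum_univ_two, Real.sin_add, Real.cos_add] <;> ring

lemma qtt_sum_pi_succ {n : ℕ} (s : Fin (n + 1) → ℕ)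
    (f : ((ν : Fin (n + 1)) → Fin (s ν)) → ℝ) :
    ∑ α : (ν : Fin (n + 1)) → Fin (s ν), f α
      = ∑ a : Fin (s 0), ∑ β : (ν : Fin n) → Fin (s ν.succ), f (Fin.cons a β) := by
  rw [← Equiv.sum_comp (Fin.consEquiv fun ν => Fin (s ν)) f, Fintype.sum_prod_type]
  rfl

lemma qtt_sum_castLE_two {n : ℕ} (h : n = 2) (hle : n ≤ 2) (g : Fin 2 → ℝ) :
    ∑ a : Fin n, g (a.castLE hle) = ∑ a : Fin 2, g a := by
  subst h
  have : ∀ a : Fin 2, a.castLE hle = a := fun a => Fin.ext rfl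
  simp [this]

lemma qtt_sum_castLE_one {n : ℕ} (h : n = 1) (hle : n ≤ 2) (g : Fin 2 → ℝ) :
    ∑ a : Fin n, g (a.castLE hle) = g 0 := by
  subst h
  have : ∀ a : Fin 1, a.castLE hle = 0 :=
    fun a => Fin.ext (by simpa using (Nat.lt_one_iff.mp a.isLt))
  simp [this]

lemma qtt_sum_const_one {n : ℕ} (h : n = 1) (c : ℝ) :
    ∑ _a : Fin n, c = c := by subst h; simp

lemma qtt_chain : ∀ (M : ℕ) (s : Fin (M + 1) → ℕ) (hle : ∀ ν, s ν ≤ 2),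
    s (Fin.last M) = 1 → (∀ ν, ν ≠ Fin.last M → s ν = 2) →
    ∀ (x : ℝ) (θ : Fin M → ℝ),
    (∑ α : (ν : Fin (M + 1)) → Fin (s ν),
        qttRow x ((α 0).castLE (hle 0)) *
          ∏ ν : Fin M, qttRot (θ ν) ((α ν.castSucc).castLE (hle _))
            ((α ν.succ).castLE (hle _)))
      = Real.sin (x + ∑ ν, θ ν) := by
  intro M
  induction M with
  | zero =>
    intro s hle hlast h2 x θ
    rw [qtt_sum_pi_succ]
    simp only [Fin.prod_univ_zero, mul_one, Fin.cons_zero]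
    have h0 : s 0 = 1 := hlast
    simp only [Fintype.sum_unique]
    rw [qtt_sum_castLE_one h0]
    simp [qttRow]
  | succ M ih =>
    intro s hle hlast h2 x θ
    have h0 : s 0 = 2 := by
      refine h2 0 fun h => ?_
      have := congrArg Fin.val h
      simp [Fin.val_last] at this
    rw [qtt_sum_pi_succ]
    have key : ∀ (a : Fin (s 0)) (β : (ν : Fin (M + 1)) → Fin (s ν.succ)),
        (qttRow x (((Fin.cons a β : (ν : Fin (M + 2)) → Fin (s ν)) 0).castLE (hle 0)) *
          ∏ ν : Fin (M + 1), qttRot (θ ν)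
            (((Fin.cons a β : (ν : Fin (M + 2)) → Fin (s ν)) ν.castSucc).castLE (hle _))
            (((Fin.cons a β : (ν : Fin (M + 2)) → Fin (s ν)) ν.succ).castLE (hle _)))
        = (qttRow x (a.castLE (hle 0)) *
            qttRot (θ 0) (a.castLE (hle 0)) ((β 0).castLE (hle _))) *
            ∏ ν : Fin M, qttRot (θ ν.succ)
              ((β ν.castSucc).castLE (hle _)) ((β ν.succ).castLE (hle _)) := by
      intro a β
      rw [Fin.prod_univ_succ]
      simp only [Fin.cons_zero, Fin.castSucc_zero, ← Fin.succ_castSucc, Fin.cons_succ]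
      ring
    rw [Finset.sum_congr rfl fun a _ => Finset.sum_congr rfl fun β _ => key a β]
    rw [Finset.sum_comm]
    have key2 : ∀ β : (ν : Fin (M + 1)) → Fin (s ν.succ),
        (∑ a : Fin (s 0), (qttRow x (a.castLE (hle 0)) *
            qttRot (θ 0) (a.castLE (hle 0)) ((β 0).castLE (hle (0 : Fin (M + 1)).succ))) *
            ∏ ν : Fin M, qttRot (θ ν.succ)
              ((β ν.castSucc).castLE (hle _)) ((β ν.succ).castLE (hle _)))
        = qttRow (x + θ 0) ((β 0).castLE (hle (0 : Fin (M + 1)).succ)) *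
            ∏ ν : Fin M, qttRot (θ ν.succ)
              ((β ν.castSucc).castLE (hle _)) ((β ν.succ).castLE (hle _)) := by
      intro β
      rw [← Finset.sum_mul,
        qtt_sum_castLE_two h0 (hle 0)
          (fun c => qttRow x c * qttRot (θ 0) c ((β 0).castLE (hle (0 : Fin (M + 1)).succ))),
        qtt_step]
    rw [Finset.sum_congr rfl fun β _ => key2 β]
    have hlast' : s (Fin.last M).succ = 1 := by
      rw [Fin.succ_last]; exact hlast
    have h2' : ∀ ν : Fin (M + 1), ν ≠ Fin.last M → s ν.succ = 2 := by
      intro ν hν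
      refine h2 ν.succ fun h => hν (Fin.succ_injective _ ?_)
      rw [h, Fin.succ_last]
    have hsum : x + ∑ ν : Fin (M + 1), θ ν = (x + θ 0) + ∑ ν : Fin M, θ ν.succ := by
      rw [Fin.sum_univ_succ]; ring
    rw [hsum]
    exact ih (fun ν => s ν.succ) (fun ν => hle ν.succ) hlast' h2' (x + θ 0)
      (fun ν => θ ν.succ)

/-- The quantics folding of the trigonometric vector `(sin(φ + ω i))` admits an
exact tensor-train (MPS) representation with all TT-ranks at most 2; the
matrix product is expressed entrywise as a sum over index paths. -/
theorem qtt_sine_rank_two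
    (ω φ : ℝ) (L : ℕ) (hL : 1 ≤ L) :
    ∃ r : Fin (L + 1) → ℕ, r 0 = 1 ∧ r (Fin.last L) = 1 ∧ (∀ ν, r ν ≤ 2) ∧
      ∃ A : (ν : Fin L) → Fin 2 → Matrix (Fin (r ν.castSucc)) (Fin (r ν.succ)) ℝ,
        ∀ j : Fin L → Fin 2,
          (∑ α : (ν : Fin (L + 1)) → Fin (r ν),
              ∏ ν : Fin L, A ν (j ν) (α ν.castSucc) (α ν.succ))
            = Real.sin (φ + ω * (∑ ν : Fin L, (j ν : ℕ) * 2 ^ (ν : ℕ) : ℕ)) := by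
  obtain ⟨M, rfl⟩ := Nat.exists_eq_succ_of_ne_zero (by omega : L ≠ 0)
  set r : Fin (M + 1 + 1) → ℕ :=
    fun ν => if (ν : ℕ) = 0 ∨ (ν : ℕ) = M + 1 then 1 else 2 with hr_def
  have hr : ∀ μ, r μ ≤ 2 := by
    intro μ; simp only [hr_def]; split <;> omega
  have hr0 : r 0 = 1 := by simp [hr_def]
  have hrlast : r (Fin.last (M + 1)) = 1 := by simp [hr_def, Fin.val_last]
  refine ⟨r, hr0, hrlast, hr, ?_⟩
  refine ⟨fun ν jv a b =>
    if (ν : ℕ) = 0 then qttRow (φ + ((jv : ℕ) : ℝ) * ω) (b.castLE (hr _))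
    else qttRot (((jv : ℕ) : ℝ) * ω * 2 ^ (ν : ℕ)) (a.castLE (hr _)) (b.castLE (hr _)),
    ?_⟩
  intro j
  rw [qtt_sum_pi_succ]
  have key : ∀ (a : Fin (r 0)) (β : (ν : Fin (M + 1)) → Fin (r ν.succ)),
      (∏ ν : Fin (M + 1),
        (if (ν : ℕ) = 0 then
          qttRow (φ + ((j ν : ℕ) : ℝ) * ω)
            (((Fin.cons a β : (ν : Fin (M + 2)) → Fin (r ν)) ν.succ).castLE (hr _))
        else qttRot (((j ν : ℕ) : ℝ) * ω * 2 ^ (ν : ℕ))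
          (((Fin.cons a β : (ν : Fin (M + 2)) → Fin (r ν)) ν.castSucc).castLE (hr _))
          (((Fin.cons a β : (ν : Fin (M + 2)) → Fin (r ν)) ν.succ).castLE (hr _))))
      = qttRow (φ + ((j 0 : ℕ) : ℝ) * ω) ((β 0).castLE (hr _)) *
          ∏ ν : Fin M, qttRot (((j ν.succ : ℕ) : ℝ) * ω * 2 ^ ((ν.succ : Fin (M + 1)) : ℕ))
            ((β ν.castSucc).castLE (hr _)) ((β ν.succ).castLE (hr _)) := by
    intro a β
    rw [Fin.prod_univ_succ]
    simp only [Fin.cons_zero, Fin.castSucc_zero, ← Fin.succ_castSucc, Fin.cons_succ,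
      Fin.val_zero, Fin.val_succ, if_true, Nat.succ_ne_zero, if_false, eq_self_iff_true]
  rw [Finset.sum_congr rfl fun a _ => Finset.sum_congr rfl fun β _ => key a β]
  rw [qtt_sum_const_one hr0]
  have hlast' : r (Fin.last M).succ = 1 := by
    rw [Fin.succ_last]; exact hrlast
  have h2' : ∀ ν : Fin (M + 1), ν ≠ Fin.last M → r ν.succ = 2 := by
    intro ν hν
    have hv : (ν : ℕ) ≠ M := fun h => hν (Fin.ext (by simp [Fin.val_last, h]))
    simp only [hr_def, Fin.val_succ]
    rw [if_neg]
    omega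
  have := qtt_chain (M := M) (fun ν => r ν.succ) (fun ν => hr ν.succ) hlast' h2'
    (φ + ((j 0 : ℕ) : ℝ) * ω)
    (fun ν => ((j ν.succ : ℕ) : ℝ) * ω * 2 ^ ((ν.succ : Fin (M + 1)) : ℕ))
  rw [this]
  congr 1
  rw [Fin.sum_univ_succ]
  push_cast
  simp only [Fin.val_zero, pow_zero, mul_one, mul_add, Finset.mul_sum]
  rw [show (∑ ν : Fin M, ((j ν.succ : ℕ) : ℝ) * ω * 2 ^ ((ν.succ : Fin (M + 1)) : ℕ))
      = ∑ ν : Fin M, ω * (((j ν.succ : ℕ) : ℝ) * 2 ^ ((ν.succ : Fin (M + 1)) : ℕ)) from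
    Finset.sum_congr rfl fun ν _ => by ring]
  ring
end

section
/- Let p : ℝ → ℝ be a polynomial of degree m and L ∈ ℕ with L ≥ 1. Then there exist maps A^{(ν)} : {0,1} → ℝ^{r_{ν−1} × r_ν} for ν = 1,…,L, with r₀ = r_L = 1 and r_ν ≤ m + 1 for 1 ≤ ν ≤ L−1, such that for every i ∈ {0,…,2^L − 1} with binary digits j₁,…,j_L (i = Σ_{ν=1}^{L} j_ν 2^{ν−1}), the 1×1 matrix product satisfies A^{(1)}(j₁) ⋯ A^{(L)}(j_L) = p(i). That is, the quantized image of the vector (p(i))_{i=0}^{2^L−1} admits an exact tensor-train representation with all TT-ranks at most m + 1. -/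
lemma path_sum : ∀ (n : ℕ) (r : Fin (n+1) → ℕ)
    (A : (ν : Fin n) → Matrix (Fin (r ν.castSucc)) (Fin (r ν.succ)) ℝ)
    (g : (ν : Fin (n+1)) → Fin (r ν) → ℝ),
    (∀ ν : Fin n, ∀ b, (∑ a, g ν.castSucc a * A ν a b) = g ν.succ b) →
    (∑ α : (ν : Fin (n+1)) → Fin (r ν), g 0 (α 0) * ∏ ν, A ν (α ν.castSucc) (α ν.succ))
      = ∑ b, g (Fin.last n) b := by
  intro n
  induction n with
  | zero =>
    intro r A g _
    rw [← Fintype.sum_equiv (Equiv.piUnique fun ν : Fin 1 => Fin (r ν)).symm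
      (fun b => g 0 b) (fun α => g 0 (α 0) * ∏ ν : Fin 0, A ν (α ν.castSucc) (α ν.succ))]
    · rfl
    · intro b; simp [Equiv.piUnique]; rfl
  | succ n ih =>
    intro r A g hstep
    rw [← Fintype.sum_equiv (Fin.consEquiv fun ν : Fin (n+2) => Fin (r ν))
      (fun x => g 0 (x.1) * (A 0 x.1 (x.2 0) *
        ∏ ν : Fin n, A ν.succ (x.2 ν.castSucc) (x.2 ν.succ)))
      (fun α => g 0 (α 0) * ∏ ν, A ν (α ν.castSucc) (α ν.succ))]
    · rw [Fintype.sum_prod_type, Finset.sum_comm]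
      have key : ∀ tail : (ν : Fin (n+1)) → Fin (r ν.succ),
          (∑ a : Fin (r 0), g 0 a * (A 0 a (tail 0) *
            ∏ ν : Fin n, A ν.succ (tail ν.castSucc) (tail ν.succ)))
          = g (0 : Fin (n+1)).succ (tail 0) *
            ∏ ν : Fin n, A ν.succ (tail ν.castSucc) (tail ν.succ) := by
        intro tail
        rw [← hstep 0 (tail 0), Finset.sum_mul]
        exact Finset.sum_congr rfl fun a _ => (mul_assoc _ _ _).symm
      rw [Finset.sum_congr rfl fun tail _ => key tail]
      exact ih (fun ν => r ν.succ) (fun ν => A ν.succ) (fun ν => g ν.succ)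
        (fun ν b => hstep ν.succ b)
    · intro x
      symm
      rw [Fin.prod_univ_succ]
      rfl

lemma binom_helper (x y : ℝ) (n M : ℕ) (h : n ≤ M) :
    ∑ a ∈ Finset.range (M+1), x^a * ((n.choose a : ℝ) * y^(n-a)) = (x+y)^n := by
  rw [add_pow]
  refine Eq.trans (Finset.sum_congr rfl fun k _ => by ring)
    (Finset.sum_subset (Finset.range_subset_range.2 (Nat.succ_le_succ h)) ?_).symm
  intro k hk hk'
  simp only [Finset.mem_range, not_lt] at hk hk'
  have : n.choose k = 0 := Nat.choose_eq_zero_of_lt (by omega)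
  simp [this]

/-- TT core entries for the polynomial construction. -/
noncomputable def qttCore (p : Polynomial ℝ) (m L t d a b : ℕ) : ℝ :=
  if t = 0 then (if L = 1 then p.eval (d : ℝ) else (d : ℝ) ^ b)
  else if t + 1 = L then
    ∑ k ∈ Finset.range (m+1), p.coeff k * ((k.choose a : ℝ) * ((d : ℝ) * 2 ^ t) ^ (k - a))
  else (b.choose a : ℝ) * ((d : ℝ) * 2 ^ t) ^ (b - a)

/-- Partial binary sums. -/
def qttS (L : ℕ) (j : Fin L → Fin 2) (t : ℕ) : ℕ :=
  ∑ μ ∈ Finset.range t, (if h : μ < L then ((j ⟨μ, h⟩ : ℕ)) else 0) * 2 ^ μ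

/-- The invariant carried along the train. -/
noncomputable def qttG (p : Polynomial ℝ) (L : ℕ) (j : Fin L → Fin 2) (t k : ℕ) : ℝ :=
  if t = 0 then 1
  else if t = L then p.eval ((qttS L j L : ℕ) : ℝ)
  else ((qttS L j t : ℕ) : ℝ) ^ k

/-- The quantics folding of the vector `(p(i))` of values of a polynomial of
degree `m` admits an exact tensor-train representation with all TT-ranks at
most `m + 1`; the matrix product is expressed entrywise as a sum over index
paths. -/
theorem qtt_polynomial_rank_bound
    (m : ℕ) (p : Polynomial ℝ) (hdeg : p.natDegree = m) (L : ℕ) (hL : 1 ≤ L) :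
    ∃ r : Fin (L + 1) → ℕ, r 0 = 1 ∧ r (Fin.last L) = 1 ∧ (∀ ν, r ν ≤ m + 1) ∧
      ∃ A : (ν : Fin L) → Fin 2 → Matrix (Fin (r ν.castSucc)) (Fin (r ν.succ)) ℝ,
        ∀ j : Fin L → Fin 2,
          (∑ α : (ν : Fin (L + 1)) → Fin (r ν),
              ∏ ν : Fin L, A ν (j ν) (α ν.castSucc) (α ν.succ))
            = p.eval ((∑ ν : Fin L, (j ν : ℕ) * 2 ^ (ν : ℕ) : ℕ) : ℝ) := by
  set r : Fin (L + 1) → ℕ := fun ν => if ν.val = 0 then 1 else if ν.val = L then 1 else m + 1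
    with hr
  have hr0 : r 0 = 1 := by simp [hr]
  have hrlast : r (Fin.last L) = 1 := by simp [hr, Fin.val_last]
  refine ⟨r, hr0, hrlast, fun ν => by simp only [hr]; split_ifs <;> omega, ?_⟩
  refine ⟨fun ν d => Matrix.of fun a b => qttCore p m L ν.val d.val a.val b.val, ?_⟩
  intro j
  -- the invariant
  set g : (ν : Fin (L + 1)) → Fin (r ν) → ℝ := fun ν a => qttG p L j ν.val a.val with hg
  have hSsucc : ∀ t, qttS L j (t+1) = qttS L j t +
      (if h : t < L then ((j ⟨t, h⟩ : ℕ)) else 0) * 2 ^ t := fun t =>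
    Finset.sum_range_succ _ t
  have hstep : ∀ ν : Fin L, ∀ b : Fin (r ν.succ),
      (∑ a : Fin (r ν.castSucc), g ν.castSucc a *
        (Matrix.of fun a b => qttCore p m L ν.val (j ν).val a.val b.val) a b) = g ν.succ b := by
    intro ν b
    obtain ⟨t, ht⟩ := ν
    have hd : (if h : t < L then ((j ⟨t, h⟩ : ℕ)) else 0) = ((j ⟨t, ht⟩ : ℕ)) := dif_pos ht
    show (∑ a : Fin (r (Fin.castSucc ⟨t, ht⟩)), qttG p L j t a.val *
        qttCore p m L t (j ⟨t, ht⟩).val a.val b.val) = qttG p L j (t+1) b.val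
    rw [Fin.sum_univ_eq_sum_range
      (fun i => qttG p L j t i * qttCore p m L t (j ⟨t, ht⟩).val i b.val)]
    have hcs : r (Fin.castSucc ⟨t, ht⟩) = if t = 0 then 1 else m + 1 := by
      simp only [hr]
      rw [show ((Fin.castSucc ⟨t, ht⟩ : Fin (L+1))).val = t from rfl]
      by_cases h : t = 0
      · rw [if_pos h, if_pos h]
      · rw [if_neg h, if_neg h, if_neg (by omega : ¬ t = L)]
    have hsu : r (Fin.succ ⟨t, ht⟩) = if t + 1 = L then 1 else m + 1 := by
      simp only [hr]
      rw [show ((Fin.succ ⟨t, ht⟩ : Fin (L+1))).val = t + 1 from rfl,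
        if_neg (by omega : ¬ t + 1 = 0)]
    rw [hcs]
    by_cases h0 : t = 0
    · subst h0
      rw [if_pos rfl, Finset.sum_range_one]
      have g00 : qttG p L j 0 0 = 1 := if_pos rfl
      rw [g00, one_mul, qttCore, if_pos rfl]
      by_cases hL1 : L = 1
      · rw [if_pos hL1]
        rw [qttG, if_neg (by omega : ¬ (0+1) = 0), if_pos (by omega : 0 + 1 = L)]
        have hS : qttS L j L = ((j ⟨0, ht⟩ : ℕ)) := by
          rw [congrArg (qttS L j) (by omega : L = 0 + 1), hSsucc 0, hd]
          simp [qttS]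
        rw [hS]
      · rw [if_neg hL1]
        rw [qttG, if_neg (by omega : ¬ (0+1) = 0), if_neg (by omega : ¬ 0 + 1 = L)]
        have hS : qttS L j (0+1) = ((j ⟨0, ht⟩ : ℕ)) := by
          rw [hSsucc 0, hd]
          simp [qttS]
        rw [hS]
    · rw [if_neg h0]
      have hGt : ∀ i : ℕ, qttG p L j t i = ((qttS L j t : ℕ) : ℝ) ^ i := by
        intro i
        rw [qttG, if_neg h0, if_neg (by omega : ¬ t = L)]
      by_cases hlast : t + 1 = L
      · have hb : b.val = 0 := by
          have h2 := lt_of_lt_of_eq b.isLt hsu; rw [if_pos hlast] at h2; omega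
        have hcore : ∀ i : ℕ, qttCore p m L t (j ⟨t, ht⟩).val i b.val =
            ∑ k ∈ Finset.range (m+1), p.coeff k *
              ((k.choose i : ℝ) * (((j ⟨t, ht⟩).val : ℝ) * 2 ^ t) ^ (k - i)) := by
          intro i; rw [qttCore, if_neg h0, if_pos hlast]
        calc ∑ i ∈ Finset.range (m+1),
              qttG p L j t i * qttCore p m L t (j ⟨t, ht⟩).val i b.val
            = ∑ k ∈ Finset.range (m+1), p.coeff k *
                ∑ i ∈ Finset.range (m+1), ((qttS L j t : ℕ) : ℝ) ^ i *
                  ((k.choose i : ℝ) * (((j ⟨t, ht⟩).val : ℝ) * 2 ^ t) ^ (k - i)) := by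
              simp only [hGt, hcore, Finset.mul_sum]
              rw [Finset.sum_comm]
              exact Finset.sum_congr rfl fun k _ => Finset.sum_congr rfl fun i _ => by ring
          _ = ∑ k ∈ Finset.range (m+1), p.coeff k *
                (((qttS L j t : ℕ) : ℝ) + ((j ⟨t, ht⟩).val : ℝ) * 2 ^ t) ^ k := by
              refine Finset.sum_congr rfl fun k hk => ?_
              rw [binom_helper _ _ k m (by simpa using Nat.lt_succ_iff.mp (Finset.mem_range.mp hk))]
          _ = qttG p L j (t+1) b.val := by
              rw [qttG, if_neg (by omega : ¬ t + 1 = 0), if_pos hlast]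
              rw [Polynomial.eval_eq_sum_range, hdeg]
              refine Finset.sum_congr rfl fun k _ => ?_
              congr 1
              rw [show qttS L j L = qttS L j (t+1) from
                congrArg (qttS L j) hlast.symm, hSsucc t, hd]
              push_cast
              ring
      · have hb : b.val ≤ m := by
          have h2 := lt_of_lt_of_eq b.isLt hsu; rw [if_neg hlast] at h2; omega
        have hcore : ∀ i : ℕ, qttCore p m L t (j ⟨t, ht⟩).val i b.val =
            (b.val.choose i : ℝ) * (((j ⟨t, ht⟩).val : ℝ) * 2 ^ t) ^ (b.val - i) := by
          intro i; rw [qttCore, if_neg h0, if_neg hlast]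
        simp only [hGt, hcore]
        rw [binom_helper _ _ b.val m hb]
        rw [qttG, if_neg (by omega : ¬ t + 1 = 0), if_neg (by omega : ¬ t + 1 = L)]
        rw [hSsucc t, hd]
        push_cast
        ring
  have main := path_sum L r (fun ν => Matrix.of fun a b =>
    qttCore p m L ν.val (j ν).val a.val b.val) g hstep
  calc (∑ α : (ν : Fin (L + 1)) → Fin (r ν), ∏ ν : Fin L,
          (Matrix.of fun a b => qttCore p m L ν.val (j ν).val a.val b.val)
            (α ν.castSucc) (α ν.succ))
      = ∑ α : (ν : Fin (L + 1)) → Fin (r ν), g 0 (α 0) * ∏ ν : Fin L,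
          (Matrix.of fun a b => qttCore p m L ν.val (j ν).val a.val b.val)
            (α ν.castSucc) (α ν.succ) := by
        refine Finset.sum_congr rfl fun α _ => ?_
        have : g 0 (α 0) = 1 := by simp [hg, qttG]
        rw [this, one_mul]
    _ = ∑ b : Fin (r (Fin.last L)), g (Fin.last L) b := main
    _ = p.eval ((∑ ν : Fin L, (j ν : ℕ) * 2 ^ (ν : ℕ) : ℕ) : ℝ) := by
        show (∑ b : Fin (r (Fin.last L)), qttG p L j L b.val) = _
        rw [Fin.sum_univ_eq_sum_range (fun i => qttG p L j L i), hrlast,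
          Finset.sum_range_one]
        rw [qttG, if_neg (by omega : ¬ L = 0), if_pos rfl]
        congr 2
        rw [qttS, ← Fin.sum_univ_eq_sum_range
          (fun μ => (if h : μ < L then ((j ⟨μ, h⟩ : ℕ)) else 0) * 2 ^ μ) L]
        exact Finset.sum_congr rfl fun ν _ => by rw [dif_pos ν.isLt]
end

section
/- Let K be a finite index set, and for each ℓ ∈ {1,2,3} and each k ∈ K let W_k^{(ℓ)} : ℝ^{N} → ℝ^{n} be a linear map (the shift-and-windowing operator along mode ℓ). Let P̃ = Σ_{q=1}^{R} p̃_q^{(1)} ⊗ p̃_q^{(2)} ⊗ p̃_q^{(3)} be a rank-R canonical tensor with p̃_q^{(ℓ)} ∈ ℝ^{N}. Then the lattice sum over the full 3D index set factorizes: Σ_{(k₁,k₂,k₃) ∈ K³} (W_{k₁}^{(1)} ⊗ W_{k₂}^{(2)} ⊗ W_{k₃}^{(3)}) P̃ = Σ_{q=1}^{R} (Σ_{k₁ ∈ K} W_{k₁}^{(1)} p̃_q^{(1)}) ⊗ (Σ_{k₂ ∈ K} W_{k₂}^{(2)} p̃_q^{(2)}) ⊗ (Σ_{k₃ ∈ K}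 W_{k₃}^{(3)} p̃_q^{(3)}). In particular, the sum of the |K|³ shifted copies of a rank-R canonical tensor is itself a canonical tensor of rank at most R, and it is computable by |K| one-dimensional summations per mode and canonical vector. -/
private lemma rev3 {K : Type*} [Fintype K] (g : K → K → K → ℝ) :
    ∑ a : K, ∑ b : K, ∑ c : K, g a b c = ∑ c : K, ∑ b : K, ∑ a : K, g a b c :=
  calc ∑ a : K, ∑ b : K, ∑ c : K, g a b c
      = ∑ b : K, ∑ a : K, ∑ c : K, g a b c := Finset.sum_comm
    _ = ∑ b : K, ∑ c : K, ∑ a : K, g a b c :=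
        Finset.sum_congr rfl fun b _ => Finset.sum_comm
    _ = ∑ c : K, ∑ b : K, ∑ a : K, g a b c := Finset.sum_comm

private lemma sum_pull {K Q : Type*} [Fintype K] [Fintype Q]
    (f : K → K → K → Q → ℝ) :
    ∑ k₁ : K, ∑ k₂ : K, ∑ k₃ : K, ∑ q : Q, f k₁ k₂ k₃ q
      = ∑ q : Q, ∑ k₃ : K, ∑ k₂ : K, ∑ k₁ : K, f k₁ k₂ k₃ q :=
  calc ∑ k₁ : K, ∑ k₂ : K, ∑ k₃ : K, ∑ q : Q, f k₁ k₂ k₃ q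
      = ∑ k₁ : K, ∑ k₂ : K, ∑ q : Q, ∑ k₃ : K, f k₁ k₂ k₃ q :=
        Finset.sum_congr rfl fun k₁ _ => Finset.sum_congr rfl fun k₂ _ => Finset.sum_comm
    _ = ∑ k₁ : K, ∑ q : Q, ∑ k₂ : K, ∑ k₃ : K, f k₁ k₂ k₃ q :=
        Finset.sum_congr rfl fun k₁ _ => Finset.sum_comm
    _ = ∑ q : Q, ∑ k₁ : K, ∑ k₂ : K, ∑ k₃ : K, f k₁ k₂ k₃ q := Finset.sum_comm
    _ = ∑ q : Q, ∑ k₃ : K, ∑ k₂ : K, ∑ k₁ : K, f k₁ k₂ k₃ q :=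
        Finset.sum_congr rfl fun q _ => rev3 (fun a b c => f a b c q)

/-- Lattice summation in the canonical tensor format: the sum over a 3D lattice
of shifted-and-windowed copies of a rank-R canonical tensor is the rank-R
canonical tensor whose directional vectors are the assembled 1D sums. -/
theorem lattice_sum_canonical_format
    (K : Type*) [Fintype K] (N n R : ℕ)
    (W : Fin 3 → K → ((Fin N → ℝ) →ₗ[ℝ] (Fin n → ℝ)))
    (p : Fin R → Fin 3 → Fin N → ℝ) :
    ∀ i₁ i₂ i₃ : Fin n,
      (∑ k₁ : K, ∑ k₂ : K, ∑ k₃ : K, ∑ q : Fin R,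
          (W 0 k₁ (p q 0)) i₁ * (W 1 k₂ (p q 1)) i₂ * (W 2 k₃ (p q 2)) i₃)
        = ∑ q : Fin R,
            (∑ k₁ : K, W 0 k₁ (p q 0)) i₁ *
            (∑ k₂ : K, W 1 k₂ (p q 1)) i₂ *
            (∑ k₃ : K, W 2 k₃ (p q 2)) i₃ := by
  intro i₁ i₂ i₃
  simp only [Finset.sum_apply, Finset.sum_mul, Finset.mul_sum]
  exact sum_pull fun k₁ k₂ k₃ q => (W 0 k₁) (p q 0) i₁ * (W 1 k₂) (p q 1) i₂ * (W 2 k₃) (p q 2) i₃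
end
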